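/- arXiv:2310.09372 — 7 statements merged into one kernel-verified Lean document; each statement's English description precedes it below -/
import Mathlib

section
/- Let X be an infinite set and f : X → X a surjective function such that there is at most one point x ∈ X with the fiber f⁻¹(x) having exactly one element. Then for any a ∈ X, the iterated preimage set T_∞(f,a) = {a} ∪ f⁻¹(a) ∪ f⁻²(a) ∪ ⋯ either has exactly one element or is infinite. -/
/-! If `T` is finite, surjectivity makes `f` map `f⁻¹(T) ⊆ T` onto `T`, so counting forces `f` to
be injective on `f⁻¹(T)`: every point of `T` has exactly one preimage. At most one point has
that property, and `a ∈ T`, so `T = {a}`. -/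

open Function Set

lemma preimage_setOf_iterate_eq_subset {X : Type*} (f : X → X) (a : X) :
    f ⁻¹' {x | ∃ n, f^[n] x = a} ⊆ {x | ∃ n, f^[n] x = a} := by
  rintro z ⟨n, hn⟩
  exact ⟨n + 1, by rwa [iterate_succ_apply]⟩

lemma Set.Finite.existsUnique_of_preimage_subset {X : Type*} {f : X → X} {s : Set X}
    (hs : s.Finite) (hf : Surjective f) (hsub : f ⁻¹' s ⊆ s) {x : X} (hx : x ∈ s) :
    ∃! z, f z = x := by
  have hpre_fin : (f ⁻¹' s).Finite := hs.subset hsub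
  have hinj : InjOn f (f ⁻¹' s) := by
    refine injOn_of_ncard_image_eq (le_antisymm (ncard_image_le hpre_fin) ?_) hpre_fin
    calc (f ⁻¹' s).ncard ≤ s.ncard := ncard_le_ncard hsub hs
      _ = (f '' (f ⁻¹' s)).ncard := by rw [image_preimage_eq s hf]
  obtain ⟨z, rfl⟩ := hf x
  exact ⟨z, rfl, fun y hy => hinj (by simpa [hy] using hx) hx hy⟩

theorem stmt_0_general {X : Type*} (f : X → X) (hf : Function.Surjective f)
    (h1 : {x : X | ∃! z : X, f z = x}.Subsingleton) (a : X) :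
    {x : X | ∃ n : ℕ, f^[n] x = a} = {a} ∨ {x : X | ∃ n : ℕ, f^[n] x = a}.Infinite := by
  refine or_iff_not_imp_right.mpr fun hfin => ?_
  have hunique : {x : X | ∃ n : ℕ, f^[n] x = a} ⊆ {x : X | ∃! z : X, f z = x} :=
    fun x hx => (not_infinite.mp hfin).existsUnique_of_preimage_subset hf
      (preimage_setOf_iterate_eq_subset f a) hx
  exact (h1.anti hunique).eq_singleton_of_mem ⟨0, rfl⟩

/-- Let `X` be an infinite set and `f : X → X` a surjective function such
that there is at most one point `x ∈ X` whose fiber `f⁻¹(x)` has exactly one element.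
Then for any `a ∈ X`, the iterated preimage set `T_∞(f,a) = ⋃ₙ f⁻ⁿ(a)` either has exactly
one element (namely it equals `{a}`) or is infinite. -/
theorem stmt_0 {X : Type*} [Infinite X] (f : X → X) (hf : Function.Surjective f)
    (h1 : {x : X | ∃! z : X, f z = x}.Subsingleton) (a : X) :
    {x : X | ∃ n : ℕ, f^[n] x = a} = {a} ∨ {x : X | ∃ n : ℕ, f^[n] x = a}.Infinite :=
  stmt_0_general f hf h1 a
end

section
/- Let X be an infinite set, f : X → X surjective, and x ∈ X with T_∞(f,x) infinite. Then for any finite collection y₁, …, y_N ∈ T_∞(f,x), there exists x₀ ∈ T_∞(f,x) such that none of the yᵢ lies in T_∞(f,x₀). -/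
/-!
The forward orbit of a point `y` of `T_∞(f, x)` meets `T_∞(f, x)` in only finitely many points:
after reaching `x` it follows the forward orbit of `x`, which is finite when `x` is periodic and
meets `T_∞(f, x)` only in `x` otherwise. Since `y ∈ T_∞(f, x₀)` exactly when `x₀` lies on the
forward orbit of `y`, any `x₀` in the infinite set `T_∞(f, x)` off these finitely many finite
sets will do.
-/

open Function Set

section

variable {α : Type*} {f : α → α}

/-- `T_∞(f, a) = ⋃ₙ f⁻ⁿ(a)`. -/
def backwardOrbit (f : α → α) (a : α) : Set α := {z | ∃ n, f^[n] z = a}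

theorem finite_range_iterate_of_mem_periodicPts {x : α} (hx : x ∈ periodicPts f) :
    (range fun n => f^[n] x).Finite := by
  refine ((finite_Iio (minimalPeriod f x)).image fun n => f^[n] x).subset ?_
  rintro _ ⟨n, rfl⟩
  exact ⟨n % minimalPeriod f x, Nat.mod_lt _ (minimalPeriod_pos_of_mem_periodicPts hx),
    iterate_mod_minimalPeriod_eq⟩

variable (f) in
theorem backwardOrbit_inter_range_iterate_self_finite (x : α) :
    (backwardOrbit f x ∩ range fun n => f^[n] x).Finite := by
  by_cases hx : x ∈ periodicPts f
  · exact (finite_range_iterate_of_mem_periodicPts hx).inter_of_right _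
  · refine (finite_singleton x).subset ?_
    rintro _ ⟨⟨m, hm⟩, ⟨_ | j, rfl⟩⟩
    · rfl
    · exact absurd ⟨m + (j + 1), by omega, by rwa [IsPeriodicPt, IsFixedPt, iterate_add_apply]⟩ hx

theorem range_iterate_subset_of_iterate_eq {x y : α} {n : ℕ} (hn : f^[n] y = x) :
    (range fun k => f^[k] y) ⊆ ((fun k => f^[k] y) '' Iio n) ∪ range fun k => f^[k] x := by
  rintro _ ⟨k, rfl⟩
  rcases lt_or_ge k n with hk | hk
  · exact Or.inl ⟨k, hk, rfl⟩
  · obtain ⟨j, rfl⟩ := exists_add_of_le hk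
    exact Or.inr ⟨j, by simp only [add_comm n j, iterate_add_apply, hn]⟩

theorem backwardOrbit_inter_range_iterate_finite {x y : α} (hy : y ∈ backwardOrbit f x) :
    (backwardOrbit f x ∩ range fun k => f^[k] y).Finite := by
  obtain ⟨n, hn⟩ := hy
  have hprefix := ((finite_Iio n).image fun k => f^[k] y).inter_of_right (backwardOrbit f x)
  refine (hprefix.union (backwardOrbit_inter_range_iterate_self_finite f x)).subset ?_
  rw [← inter_union_distrib_left]
  exact inter_subset_inter_right _ (range_iterate_subset_of_iterate_eq hn)

end

theorem stmt_1_general {X : Type*} (f : X → X)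
    (x : X) (hT : {z : X | ∃ n : ℕ, f^[n] z = x}.Infinite)
    (Y : Finset X) (hY : (Y : Set X) ⊆ {z : X | ∃ n : ℕ, f^[n] z = x}) :
    ∃ x₀ ∈ {z : X | ∃ n : ℕ, f^[n] z = x},
      ∀ y ∈ Y, y ∉ {z : X | ∃ n : ℕ, f^[n] z = x₀} := by
  have hfin : (⋃ y ∈ Y, backwardOrbit f x ∩ range fun k => f^[k] y).Finite :=
    Y.finite_toSet.biUnion fun y hy => backwardOrbit_inter_range_iterate_finite (hY hy)
  obtain ⟨x₀, hx₀, hx₀_off⟩ := (hT.sdiff hfin).nonempty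
  exact ⟨x₀, hx₀, fun y hy ⟨k, hk⟩ => hx₀_off (mem_biUnion hy ⟨hx₀, k, hk⟩)⟩

/-- Let `X` be an infinite set, `f : X → X` surjective, and `x ∈ X` with the
iterated preimage set `T_∞(f,x) = ⋃ₙ f⁻ⁿ(x)` infinite. Then for any finite collection
`y₁, …, y_N ∈ T_∞(f,x)` there exists `x₀ ∈ T_∞(f,x)` such that no `yᵢ` lies in `T_∞(f,x₀)`. -/
theorem stmt_1 {X : Type*} [Infinite X] (f : X → X) (hf : Function.Surjective f)
    (x : X) (hT : {z : X | ∃ n : ℕ, f^[n] z = x}.Infinite)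
    (Y : Finset X) (hY : (Y : Set X) ⊆ {z : X | ∃ n : ℕ, f^[n] z = x}) :
    ∃ x₀ ∈ {z : X | ∃ n : ℕ, f^[n] z = x},
      ∀ y ∈ Y, y ∉ {z : X | ∃ n : ℕ, f^[n] z = x₀} :=
  stmt_1_general f x hT Y hY
end

section
/- Let X be a set, f : X → X, and y ∈ X such that the forward orbit {fⁿ(y) : n ≥ 0} is contained in T_∞(f,x) for some x. Then the forward orbit of y under f is a finite set. -/
/-!
Since `y` lies in its own orbit, some iterate `f^[m] y` equals `x`; since `f x = f^[m + 1] y`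
also lies in the orbit, some iterate of `f x` returns to `x`, so `x` is periodic. The orbit of
`y` is then the finitely many points `f^[i] y` with `i < m` together with the periodic orbit of `x`.
-/

namespace Function

variable {α : Type*} {f : α → α}

theorem IsPeriodicPt.finite_range_iterate {n : ℕ} {x : α} (hx : IsPeriodicPt f n x) (hn : 0 < n) :
    (Set.range fun k => f^[k] x).Finite := by
  refine (Set.finite_range fun i : Fin n => f^[i] x).subset ?_
  rintro _ ⟨k, rfl⟩
  exact ⟨⟨k % n, Nat.mod_lt k hn⟩, hx.iterate_mod_apply k⟩

theorem finite_range_iterate_of_iterate_mem_periodicPts {m : ℕ} {y : α}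
    (hy : f^[m] y ∈ periodicPts f) : (Set.range fun k => f^[k] y).Finite := by
  obtain ⟨n, hn, hper⟩ := hy
  refine ((Set.finite_Iio m).image (f^[·] y) |>.union (hper.finite_range_iterate hn)).subset ?_
  rintro _ ⟨k, rfl⟩
  rcases lt_or_ge k m with hk | hk
  · exact Or.inl ⟨k, hk, rfl⟩
  · refine Or.inr ⟨k - m, ?_⟩
    simp only [← iterate_add_apply, Nat.sub_add_cancel hk]

end Function

/-- Let `X` be a set, `f : X → X`, and `y ∈ X` such that the forward orbit
`{fⁿ(y) : n ≥ 0}` is contained in `T_∞(f,x) = ⋃ₙ f⁻ⁿ(x)` for some `x`. Then the forward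
orbit of `y` under `f` is a finite set. -/
theorem stmt_3 {X : Type*} (f : X → X) (x y : X)
    (h : {w : X | ∃ n : ℕ, f^[n] y = w} ⊆ {z : X | ∃ n : ℕ, f^[n] z = x}) :
    {w : X | ∃ n : ℕ, f^[n] y = w}.Finite := by
  obtain ⟨m, hm⟩ : ∃ m, f^[m] y = x := h ⟨0, rfl⟩
  obtain ⟨k, hk⟩ : ∃ k, f^[k] (f^[m + 1] y) = x := h ⟨m + 1, rfl⟩
  have hx : Function.IsPeriodicPt f (k + 1) x := by
    rwa [Function.iterate_succ_apply', hm, ← Function.iterate_succ_apply] at hk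
  exact Function.finite_range_iterate_of_iterate_mem_periodicPts
    (hm ▸ Function.mk_mem_periodicPts k.succ_pos hx)
end

section
/- Let K be a field with a non-archimedean valuation v, and let f, g ∈ K[z] be monic polynomials of degrees d and e respectively. Let γ₁, …, γ_{d−1} be the critical points of f (roots of f′, with multiplicity), and for n ≥ 1 set N_{g,n} = Σᵢ v(g(fⁿ(γᵢ))). Let Δ_{g,n} = Disc(g ∘ fⁿ). Then for all n ≥ 0: v(Δ_{g,n}) = dⁿ·v(Disc(g)) + e·n·dⁿ·v(d) + Σ_{k=0}^{n−1} dᵏ·N_{g,n−k}. -/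
/-! The roots of `h ∘ f` are the fibres `f⁻¹(α)` over the roots `α` of `h`, and at a root `β`
over `α` the chain rule gives `(h ∘ f)'(β) = h'(α) f'(β)`. Factoring `f' = d ∏ᵢ (X - γᵢ)` and
summing `v(β - γᵢ)` over the fibre, which is the root multiset of the monic `f - α`, gives
`d v(d) + Σᵢ v(f(γᵢ) - α)`; summing over `α` turns `Σ_α v(f(γᵢ) - α)` into `v(h(f(γᵢ)))`. Hence
`v(Disc(h ∘ f)) = d v(Disc h) + d (deg h) v(d) + Σᵢ v(h(f(γᵢ)))`, and the formula follows by
induction on `n`, applied to `h = g ∘ fⁿ`. -/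

/-- The discriminant of a monic polynomial `h` over an algebraically closed field:
`(-1)^(m(m-1)/2) · ∏ᵢ h'(rᵢ)`, the product running over the roots `rᵢ` of `h`
with multiplicity (`m = deg h`). For monic split polynomials this agrees with the
classical discriminant. -/
noncomputable def polyDisc {K : Type*} [Field K] (h : Polynomial K) : K :=
  (-1 : K) ^ (h.natDegree * (h.natDegree - 1) / 2) *
    (h.roots.map (fun r => h.derivative.eval r)).prod

open Polynomial

namespace AddValuation

variable {R Γ₀ : Type*} [CommRing R] [LinearOrderedAddCommMonoidWithTop Γ₀]
  (v : AddValuation R Γ₀)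

theorem map_multiset_prod (s : Multiset R) : v s.prod = (s.map v).sum := by
  induction s using Multiset.induction_on with
  | empty => simp
  | cons a s ih => simp [v.map_mul, ih]

theorem map_neg_one_pow (k : ℕ) : v ((-1 : R) ^ k) = 0 := by
  rw [v.map_pow, v.map_neg, v.map_one, smul_zero]

theorem map_eval_of_splits [IsDomain R] {p : R[X]} (hp : p.Splits) (x : R) :
    v (p.eval x) = v p.leadingCoeff + (p.roots.map fun α => v (x - α)).sum := by
  rw [hp.eval_eq_prod_roots, v.map_mul, v.map_multiset_prod, Multiset.map_map]
  rfl

theorem map_eval_of_splits_of_monic [IsDomain R] {p : R[X]} (hp : p.Splits) (hm : p.Monic)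
    (x : R) : v (p.eval x) = (p.roots.map fun α => v (x - α)).sum := by
  rw [v.map_eval_of_splits hp, hm.leadingCoeff, v.map_one, zero_add]

end AddValuation

theorem Polynomial.roots_comp_of_splits {R : Type*} [CommRing R] [IsDomain R] {h f : R[X]}
    (hs : h.Splits) (hm : h.Monic) (hf : 0 < f.natDegree) :
    (h.comp f).roots = h.roots.bind fun α => (f - C α).roots := by
  have hsub : ∀ α : R, f - C α ≠ 0 := fun α h0 => by
    have := congrArg natDegree h0
    rw [natDegree_sub_C, natDegree_zero] at this
    omega
  conv_lhs => rw [hs.eq_prod_roots_of_monic hm]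
  rw [multiset_prod_comp, Multiset.map_map, roots_multiset_prod, Multiset.bind_map]
  · simp [sub_comp]
  · simp only [Multiset.mem_map, Function.comp_apply, sub_comp, X_comp, C_comp, not_exists,
      not_and]
    exact fun α _ => hsub α

section

variable {K Γ₀ : Type*} [Field K] [LinearOrderedAddCommMonoidWithTop Γ₀]
  (v : AddValuation K Γ₀)

theorem AddValuation.map_polyDisc (h : K[X]) :
    v (polyDisc h) = (h.roots.map fun r => v (h.derivative.eval r)).sum := by
  rw [polyDisc, v.map_mul, v.map_neg_one_pow, zero_add, v.map_multiset_prod, Multiset.map_map]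
  rfl

variable [IsAlgClosed K] [CharZero K]

/-- The valuation of the resultant identity `∏_{f(β) = α} f'(β) = d^d ∏ᵢ (f(γᵢ) - α)`. -/
theorem AddValuation.sum_map_derivative_eval_roots_sub_C {f : K[X]} (hf : f.Monic)
    (hdeg : 0 < f.natDegree) (α : K) :
    ((f - C α).roots.map fun β => v (f.derivative.eval β)).sum =
      f.natDegree • v (f.natDegree : K) +
        (f.derivative.roots.map fun γ => v (f.eval γ - α)).sum := by
  have hmon : (f - C α).Monic :=
    hf.sub_of_left (degree_C_le.trans_lt (natDegree_pos_iff_degree_pos.mp hdeg))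
  have hcard : Multiset.card (f - C α).roots = f.natDegree := by
    rw [splits_iff_card_roots.mp (IsAlgClosed.splits _), natDegree_sub_C]
  simp only [v.map_eval_of_splits (IsAlgClosed.splits f.derivative), leadingCoeff_derivative,
    hf.leadingCoeff, one_mul, Multiset.sum_map_add, Multiset.map_const', Multiset.sum_replicate,
    hcard]
  rw [Multiset.sum_map_sum_map]
  congr 2
  refine Multiset.map_congr rfl fun γ _ => ?_
  have hγ : f.eval γ - α = (f - C α).eval γ := by simp
  rw [hγ, v.map_eval_of_splits_of_monic (IsAlgClosed.splits _) hmon]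
  simp only [v.map_sub_swap]

theorem AddValuation.map_polyDisc_comp {f h : K[X]} (hf : f.Monic) (hdeg : 0 < f.natDegree)
    (hh : h.Monic) :
    v (polyDisc (h.comp f)) =
      f.natDegree • v (polyDisc h) + (f.natDegree * h.natDegree) • v (f.natDegree : K) +
        (f.derivative.roots.map fun γ => v (h.eval (f.eval γ))).sum := by
  have hcard : ∀ α : K, Multiset.card (f - C α).roots = f.natDegree := fun α => by
    rw [splits_iff_card_roots.mp (IsAlgClosed.splits _), natDegree_sub_C]
  have hfiber : ∀ α ∈ h.roots,
      ((f - C α).roots.map fun β => v ((h.comp f).derivative.eval β)).sum =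
        f.natDegree • v (h.derivative.eval α) + (f.natDegree • v (f.natDegree : K) +
          (f.derivative.roots.map fun γ => v (f.eval γ - α)).sum) := by
    intro α _
    have hchain : ∀ β ∈ (f - C α).roots, v ((h.comp f).derivative.eval β) =
        v (h.derivative.eval α) + v (f.derivative.eval β) := fun β hβ => by
      have hfβ : f.eval β = α := by
        simpa [sub_eq_zero] using isRoot_of_mem_roots hβ
      rw [derivative_comp, eval_mul, eval_comp, hfβ, v.map_mul, add_comm]
    rw [Multiset.map_congr rfl hchain, Multiset.sum_map_add, Multiset.map_const',
      Multiset.sum_replicate, hcard, v.sum_map_derivative_eval_roots_sub_C hf hdeg]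
  rw [v.map_polyDisc, v.map_polyDisc, roots_comp_of_splits (IsAlgClosed.splits h) hh hdeg,
    Multiset.map_bind, Multiset.sum_bind, Multiset.map_congr rfl hfiber, Multiset.sum_map_add,
    Multiset.sum_map_add, Multiset.sum_map_nsmul, Multiset.map_const', Multiset.sum_replicate,
    Multiset.sum_map_sum_map, splits_iff_card_roots.mp (IsAlgClosed.splits h), smul_smul,
    mul_comm h.natDegree, add_assoc]
  congr 3
  refine Multiset.map_congr rfl fun γ _ => ?_
  rw [v.map_eval_of_splits_of_monic (IsAlgClosed.splits h) hh]

end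

namespace Polynomial

variable {R : Type*} [CommSemiring R] (f g : R[X])

theorem eval_iterate_comp_right (n : ℕ) (x : R) :
    ((fun q : R[X] => q.comp f)^[n] g).eval x = g.eval ((fun t => f.eval t)^[n] x) := by
  induction n generalizing x with
  | zero => rfl
  | succ n ih => rw [Function.iterate_succ_apply', eval_comp, ih, Function.iterate_succ_apply]

theorem natDegree_iterate_comp_right [NoZeroDivisors R] (n : ℕ) :
    ((fun q : R[X] => q.comp f)^[n] g).natDegree = g.natDegree * f.natDegree ^ n := by
  induction n with
  | zero => simp
  | succ n ih => rw [Function.iterate_succ_apply', natDegree_comp, ih, pow_succ, mul_assoc]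

variable {f g} in
theorem Monic.iterate_comp_right (hg : g.Monic) (hf : f.Monic) (hdeg : f.natDegree ≠ 0)
    (n : ℕ) : ((fun q : R[X] => q.comp f)^[n] g).Monic := by
  induction n with
  | zero => exact hg
  | succ n ih => rw [Function.iterate_succ_apply']; exact ih.comp hf hdeg

end Polynomial

/-- Let `K` be a field (of characteristic zero, algebraically closed so that
all critical points and roots are available) with an additive valuation `v`, and `f, g ∈ K[z]`
monic of degrees `d` and `e`. Let `γ₁, …, γ_{d-1}` be the critical points of `f` (the roots of
`f'` with multiplicity), and set `N_{g,n} = Σᵢ v(g(fⁿ(γᵢ)))`. Then with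
`Δ_{g,n} = Disc (g ∘ fⁿ)`:
`v(Δ_{g,n}) = dⁿ·v(Disc g) + e·n·dⁿ·v(d) + Σ_{k<n} dᵏ·N_{g,n-k}`. -/
theorem stmt_7 {K : Type*} [Field K] [IsAlgClosed K] [CharZero K]
    (v : AddValuation K (WithTop ℝ))
    (f g : Polynomial K) (hf : f.Monic) (hg : g.Monic)
    (d e : ℕ) (hdeg : f.natDegree = d) (hedeg : g.natDegree = e) (hd : 2 ≤ d)
    (n : ℕ) :
    v (polyDisc ((fun q : Polynomial K => q.comp f)^[n] g)) =
      d ^ n • v (polyDisc g) + (e * n * d ^ n) • v ((d : K)) +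
        ∑ k ∈ Finset.range n,
          d ^ k • (f.derivative.roots.map
            (fun γ => v (g.eval ((fun t => f.eval t)^[n - k] γ)))).sum := by
  induction n with
  | zero => simp
  | succ n ih =>
    have hcrit : (f.derivative.roots.map fun γ =>
        v (((fun q : K[X] => q.comp f)^[n] g).eval (f.eval γ))) =
        f.derivative.roots.map fun γ => v (g.eval ((fun t => f.eval t)^[n + 1] γ)) :=
      Multiset.map_congr rfl fun γ _ => by
        rw [eval_iterate_comp_right, ← Function.iterate_succ_apply]
    rw [Function.iterate_succ_apply', v.map_polyDisc_comp hf (by omega)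
      (hg.iterate_comp_right hf (by omega) n), natDegree_iterate_comp_right, hdeg, hedeg, ih,
      hcrit, Finset.sum_range_succ']
    simp only [smul_add, Finset.smul_sum, smul_smul, pow_zero, one_smul, Nat.sub_zero,
      Nat.add_sub_add_right, ← pow_succ']
    rw [show e * (n + 1) * d ^ (n + 1) = d * (e * n * d ^ n) + d * (e * d ^ n) by ring, add_smul]
    abel
end

section
/- Let (K,v) be a valued field of residue characteristic p, and let f(z) = z^d + a_{d−1}z^{d−1} + ⋯ + a₁z ∈ 𝒪[z] be a monic polynomial of degree d ≥ 2 fixing 0 with p | d, which is postcritically bounded at v. Then v(aᵢ) > 0 for every index i with v(i) < v(d). Consequently, the reduction of f modulo the maximal ideal has the form f̄(z) = F̄(z^{p^ℓ}) where ℓ = v_p(d) and F̄ is a nonconstant polynomial over the residue field. -/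
/-!
If `v(aᵢ) ≤ 0` while `v(i) < v(d)`, the coefficient `i aᵢ` of `f'` has smaller valuation than its
leading coefficient `d`. As `f'` splits, Vieta's formulas then force a critical point `γ` with
`v(γ) < 0`. Where `v(x) < 0` the leading term of `f` dominates, `v(f(x)) = d v(x)`, so
`v(fⁿ(γ)) = dⁿ v(γ) → -∞`, contradicting postcritical boundedness. The second statement follows
since `v(n) = v_p(n) v(p)` once `v(p) > 0`.
-/

open Polynomial

namespace AddValuation

section Integrality

variable {R : Type*} [CommRing R] {Γ₀ : Type*} [LinearOrderedAddCommMonoidWithTop Γ₀]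
  (v : AddValuation R Γ₀)

def integer : Subring R where
  carrier := {x | 0 ≤ v x}
  mul_mem' hx hy := by simpa only [Set.mem_ofPred_eq, v.map_mul] using add_nonneg hx hy
  one_mem' := v.map_one.ge
  add_mem' hx hy := v.map_le_add hx hy
  zero_mem' := by simp
  neg_mem' := by simp

theorem mem_integer {x : R} : x ∈ v.integer ↔ 0 ≤ v x := Iff.rfl

theorem natCast_nonneg (n : ℕ) : 0 ≤ v n := natCast_mem v.integer n

theorem intCast_nonneg (n : ℤ) : 0 ≤ v n := intCast_mem v.integer n

theorem coeff_multiset_prod_X_sub_C_nonneg {s : Multiset R} (hs : ∀ γ ∈ s, 0 ≤ v γ) (k : ℕ) :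
    0 ≤ v ((s.map fun γ => X - C γ).prod.coeff k) := by
  have hmem : (s.map fun γ => X - C γ).prod ∈ liftsRing v.integer.subtype := by
    refine Subring.multiset_prod_mem _ _ fun q hq => ?_
    obtain ⟨γ, hγ, rfl⟩ := Multiset.mem_map.1 hq
    exact sub_mem ((lifts_iff_liftsRing _ _).1 (X_mem_lifts _))
      ((lifts_iff_liftsRing _ _).1 (C'_mem_lifts (by simpa [mem_integer] using hs γ hγ)))
  simpa [mem_integer] using (lifts_iff_coeff_lifts _).1 ((lifts_iff_liftsRing _ _).2 hmem) k

theorem map_natCast_eq_zero_of_not_dvd {p m : ℕ} (hp : p.Prime) (hvp : 0 < v p) (hm : ¬p ∣ m) :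
    v m = 0 := by
  obtain ⟨a, b, hab⟩ : IsCoprime (p : ℤ) m :=
    Nat.isCoprime_iff_coprime.2 ((Nat.Prime.coprime_iff_not_dvd hp).2 hm)
  refine (v.natCast_nonneg m).antisymm' (not_lt.1 fun hlt => ?_)
  have hone : (1 : R) = (a : R) * p + (b : R) * m := by
    exact_mod_cast congrArg (Int.cast (R := R)) hab.symm
  have : (0 : Γ₀) < v 1 := by
    rw [hone]
    refine v.map_lt_add ?_ ?_ <;> rw [v.map_mul]
    · exact hvp.trans_le (le_add_of_nonneg_left (v.intCast_nonneg a))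
    · exact hlt.trans_le (le_add_of_nonneg_left (v.intCast_nonneg b))
  exact (v.map_one ▸ this).false

theorem map_natCast_eq_factorization_nsmul {p n : ℕ} (hp : p.Prime) (hvp : 0 < v p) (hn : n ≠ 0) :
    v n = n.factorization p • v p := by
  conv_lhs => rw [← Nat.ordProj_mul_ordCompl_eq_self n p]
  rw [Nat.cast_mul, Nat.cast_pow, v.map_mul, v.map_pow,
    v.map_natCast_eq_zero_of_not_dvd hp hvp (Nat.not_dvd_ordCompl hp hn), add_zero]

theorem leadingCoeff_le_coeff_of_roots_nonneg [IsDomain R] {g : R[X]}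
    (hcard : Multiset.card g.roots = g.natDegree) (hroots : ∀ γ ∈ g.roots, 0 ≤ v γ) (k : ℕ) :
    v g.leadingCoeff ≤ v (g.coeff k) := by
  conv_rhs => rw [← C_leadingCoeff_mul_prod_multiset_X_sub_C hcard]
  rw [coeff_C_mul, v.map_mul]
  exact le_add_of_nonneg_right (v.coeff_multiset_prod_X_sub_C_nonneg hroots k)

end Integrality

theorem exists_mem_roots_derivative_neg {K : Type*} [Field K] [IsAlgClosed K] [CharZero K]
    {Γ₀ : Type*} [LinearOrderedAddCommMonoidWithTop Γ₀] (v : AddValuation K Γ₀)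
    {f : K[X]} (hf : f.Monic) {i : ℕ} (hvi : v (f.coeff i) ≤ 0) (hi : v i < v f.natDegree) :
    ∃ γ ∈ f.derivative.roots, v γ < 0 := by
  by_contra! hroots
  obtain ⟨j, rfl⟩ : ∃ j, i = j + 1 := Nat.exists_eq_succ_of_ne_zero (by rintro rfl; simp at hi)
  have hle := v.leadingCoeff_le_coeff_of_roots_nonneg IsAlgClosed.card_roots_eq_natDegree hroots j
  rw [leadingCoeff_derivative, hf.leadingCoeff, one_mul, coeff_derivative, v.map_mul] at hle
  push_cast at hle hi
  exact hi.not_ge (hle.trans (add_le_of_nonpos_left hvi))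

section RealValued

theorem map_natCast_lt_of_not_ordProj_dvd {K : Type*} [Field K] [CharZero K]
    (v : AddValuation K (WithTop ℝ)) {p d i : ℕ} (hp : p.Prime) (hvp : 0 < v p)
    (hd : d ≠ 0) (hi : ¬ordProj[p] d ∣ i) : v i < v d := by
  have hi0 : i ≠ 0 := by rintro rfl; exact hi (dvd_zero _)
  have hlt : i.factorization p < d.factorization p := by
    by_contra! hle
    exact hi ((hp.pow_dvd_iff_le_factorization hi0).2 hle)
  rw [v.map_natCast_eq_factorization_nsmul hp hvp hi0,
    v.map_natCast_eq_factorization_nsmul hp hvp hd]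
  obtain ⟨r, hr⟩ := WithTop.ne_top_iff_exists.1 (v.ne_top_iff.2 (Nat.cast_ne_zero.2 hp.ne_zero))
  rw [← hr, WithTop.coe_pos] at hvp
  rw [← hr, ← WithTop.coe_nsmul, ← WithTop.coe_nsmul, WithTop.coe_lt_coe]
  exact nsmul_lt_nsmul_left hvp hlt

variable {R : Type*} [CommRing R] (v : AddValuation R (WithTop ℝ))
variable {f : R[X]} (hf : f.Monic) (hint : ∀ i, 0 ≤ v (f.coeff i))
include hf hint

theorem map_eval_eq_natDegree_mul {x : R} {c : ℝ} (hx : v x = c) (hc : c < 0) :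
    v (f.eval x) = ((f.natDegree * c : ℝ) : WithTop ℝ) := by
  have hpow (j : ℕ) : v (x ^ j) = ((j * c : ℝ) : WithTop ℝ) := by
    rw [v.map_pow, hx, ← WithTop.coe_nsmul, nsmul_eq_mul]
  rw [eval_eq_sum_range, Finset.sum_range_succ, hf.coeff_natDegree, one_mul]
  refine (v.map_add_eq_of_lt_right ?_).trans (hpow _)
  rw [hpow]
  refine v.map_lt_sum WithTop.coe_ne_top fun j hj => ?_
  rw [v.map_mul, hpow]
  refine lt_add_of_nonneg_of_lt (hint j) (WithTop.coe_lt_coe.2 ?_)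
  exact mul_lt_mul_of_neg_right (by exact_mod_cast Finset.mem_range.1 hj) hc

theorem map_iterate_eval_eq_natDegree_pow_mul (hd : 0 < f.natDegree) {x : R} {c : ℝ}
    (hx : v x = c) (hc : c < 0) (n : ℕ) :
    v (f.eval^[n] x) = ((f.natDegree ^ n * c : ℝ) : WithTop ℝ) := by
  induction n with
  | zero => simpa using hx
  | succ n ih =>
    rw [Function.iterate_succ_apply',
      v.map_eval_eq_natDegree_mul hf hint ih (mul_neg_of_pos_of_neg (by positivity) hc), pow_succ]
    ring_nf

theorem exists_map_iterate_eval_lt (hd : 2 ≤ f.natDegree) {x : R} (hx : v x < 0) (B : ℝ) :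
    ∃ n, v (f.eval^[n] x) < B := by
  obtain ⟨c, hc⟩ := WithTop.ne_top_iff_exists.1 hx.ne_top
  rw [← hc, WithTop.coe_lt_zero] at hx
  obtain ⟨n, hn⟩ := pow_unbounded_of_one_lt (B / c) (by exact_mod_cast hd : (1 : ℝ) < f.natDegree)
  refine ⟨n, ?_⟩
  rw [v.map_iterate_eval_eq_natDegree_pow_mul hf hint (by omega) hc.symm hx, WithTop.coe_lt_coe]
  simpa [div_mul_cancel₀ B hx.ne] using mul_lt_mul_of_neg_right hn hx

end RealValued

end AddValuation

theorem stmt_9_general {K : Type*} [Field K] [IsAlgClosed K] [CharZero K]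
    (v : AddValuation K (WithTop ℝ)) (p : ℕ) (hp : p.Prime)
    (hvp : 0 < v ((p : K)))
    (f : Polynomial K) (hf : f.Monic) (d : ℕ) (hdeg : f.natDegree = d)
    (hd2 : 2 ≤ d)
    (hint : ∀ i : ℕ, 0 ≤ v (f.coeff i))
    (hpcb : ∃ B : ℝ, ∀ γ ∈ f.derivative.roots, ∀ n : ℕ,
      (B : WithTop ℝ) ≤ v ((fun t => f.eval t)^[n] γ)) :
    (∀ i : ℕ, v ((i : K)) < v ((d : K)) → 0 < v (f.coeff i)) ∧
      (∀ i : ℕ, ¬ (p ^ (d.factorization p) ∣ i) → 0 < v (f.coeff i)) := by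
  subst hdeg
  obtain ⟨B, hB⟩ := hpcb
  have hcoeff (i : ℕ) (hi : v (i : K) < v (f.natDegree : K)) : 0 < v (f.coeff i) := by
    by_contra! hvi
    obtain ⟨γ, hγ, hvγ⟩ := v.exists_mem_roots_derivative_neg hf hvi hi
    obtain ⟨n, hn⟩ := v.exists_map_iterate_eval_lt hf hint hd2 hvγ B
    exact (hB γ hγ n).not_gt hn
  exact ⟨hcoeff, fun i hi => hcoeff i (v.map_natCast_lt_of_not_ordProj_dvd hp hvp (by omega) hi)⟩

/-- Let `(K,v)` be a (complete, algebraically closed) valued field of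
characteristic `0` and residue characteristic `p` (i.e. `v(p) > 0`), and let
`f(z) = z^d + a_{d-1}z^{d-1} + ⋯ + a₁ z` be a monic polynomial of degree `d ≥ 2` with
integral coefficients, fixing `0`, with `p ∣ d`, which is postcritically bounded at `v`
(the valuations of the forward orbits of critical points are bounded below). Then
`v(aᵢ) > 0` for every index `i` with `v(i) < v(d)`; consequently, every coefficient whose
index is not divisible by `p^ℓ` (where `ℓ = v_p(d)`) has positive valuation, i.e. the
reduction of `f` has the form `F̄(z^{p^ℓ})` with `F̄` nonconstant. -/
theorem stmt_9 {K : Type*} [Field K] [IsAlgClosed K] [CharZero K]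
    (v : AddValuation K (WithTop ℝ)) (p : ℕ) (hp : p.Prime)
    (hvp : 0 < v ((p : K)))
    (f : Polynomial K) (hf : f.Monic) (d : ℕ) (hdeg : f.natDegree = d)
    (hd2 : 2 ≤ d) (hpd : p ∣ d) (h0 : f.coeff 0 = 0)
    (hint : ∀ i : ℕ, 0 ≤ v (f.coeff i))
    (hpcb : ∃ B : ℝ, ∀ γ ∈ f.derivative.roots, ∀ n : ℕ,
      (B : WithTop ℝ) ≤ v ((fun t => f.eval t)^[n] γ)) :
    (∀ i : ℕ, v ((i : K)) < v ((d : K)) → 0 < v (f.coeff i)) ∧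
      (∀ i : ℕ, ¬ (p ^ (d.factorization p) ∣ i) → 0 < v (f.coeff i)) :=
  stmt_9_general v p hp hvp f hf d hdeg hd2 hint hpcb
end

section
/- Let (K,v) be a valued field of residue characteristic p, and let f(z) = z^d + a_{d−1}z^{d−1} + ⋯ + a₁z ∈ K[z] be a monic postcritically bounded polynomial of prime power degree d = p^ℓ ≥ 2 fixing 0. Then v(aᵢ) > 0 for all i = 1, …, d−1. In particular f has good reduction and its reduction is f̄(z) = z^d. -/
/-!
Let `ρ` be a root of `f` of least valuation. If `v ρ > 0`, each coefficient `aᵢ` with `i < d` is,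
up to sign, an elementary symmetric function of `d - i ≥ 1` roots, so `v aᵢ > 0`.

Otherwise `ρ ≠ 0`. If every critical point `γ` had `v γ ≥ v ρ`, then `f' = d ∏ (z - γ)` would give
`v (j aⱼ) ≥ v d + (d - j) v ρ`; since `v j < v d` for `0 < j < d = p ^ ℓ`, the term `ρ ^ d` would
strictly dominate every other term `aⱼ ρ ^ j` of `f ρ` (recall `a₀ = 0`), contradicting `f ρ = 0`.
So some critical point has `v γ < v ρ ≤ 0`. It is then further from `0` than every root, hence
`v (f γ) = d v γ`, and inductively `v (fⁿ γ) = dⁿ v γ → -∞`.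
-/

open Polynomial

namespace AddValuation

section CommRing

variable {R Γ₀ : Type*} [CommRing R] [LinearOrderedAddCommMonoidWithTop Γ₀]
  (v : AddValuation R Γ₀)

theorem map_natCast_nonneg (n : ℕ) : 0 ≤ v (n : R) := by
  simpa using v.map_le_sum (s := Finset.range n) (f := fun _ => (1 : R)) (g := 0) (by simp)

theorem map_intCast_nonneg (n : ℤ) : 0 ≤ v (n : R) := by
  obtain ⟨n, rfl | rfl⟩ := n.eq_nat_or_neg <;> simp [v.map_neg, map_natCast_nonneg]

theorem card_nsmul_le_map_prod {s : Multiset R} {m : Γ₀} (hs : ∀ β ∈ s, m ≤ v β) :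
    Multiset.card s • m ≤ v s.prod := by
  rw [map_multiset_prod]
  simpa using Multiset.card_nsmul_le_sum (s := s.map v) (by simpa using hs)

theorem nsmul_le_map_esymm {s : Multiset R} {m : Γ₀} (hs : ∀ β ∈ s, m ≤ v β) (k : ℕ) :
    k • m ≤ v (s.esymm k) := by
  refine Multiset.sum_induction (fun x => k • m ≤ v x) _ (fun _ _ => v.map_le_add)
    (by simp) fun x hx => ?_
  obtain ⟨t, ht, rfl⟩ := Multiset.mem_map.1 hx
  obtain ⟨hts, rfl⟩ := Multiset.mem_powersetCard.1 ht
  exact v.card_nsmul_le_map_prod fun β hβ => hs β (Multiset.mem_of_le hts hβ)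

theorem nsmul_le_map_coeff_prod_X_sub_C [Nontrivial R] {s : Multiset R} {m : Γ₀}
    (hs : ∀ β ∈ s, m ≤ v β) (i : ℕ) :
    (Multiset.card s - i) • m ≤ v ((s.map fun β => X - C β).prod.coeff i) := by
  rcases le_or_gt i (Multiset.card s) with hi | hi
  · rw [Multiset.prod_X_sub_C_coeff s hi, v.map_mul, v.map_pow, v.map_neg, v.map_one, nsmul_zero,
      zero_add]
    exact v.nsmul_le_map_esymm hs _
  · rw [coeff_eq_zero_of_natDegree_lt (by rwa [natDegree_multiset_prod_X_sub_C_eq_card]),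
      v.map_zero]
    exact le_top

end CommRing

section Domain

variable {R Γ₀ : Type*} [CommRing R] [IsDomain R] [LinearOrderedAddCommMonoidWithTop Γ₀]
  (v : AddValuation R Γ₀) {f : R[X]}

theorem add_nsmul_le_map_coeff_of_splits (hf : f.Splits) {m : Γ₀} (hm : ∀ β ∈ f.roots, m ≤ v β)
    (i : ℕ) : v f.leadingCoeff + (f.natDegree - i) • m ≤ v (f.coeff i) := by
  conv_rhs => rw [hf.eq_prod_roots, coeff_C_mul, v.map_mul]
  rw [hf.natDegree_eq_card_roots]
  exact add_le_add le_rfl (v.nsmul_le_map_coeff_prod_X_sub_C hm i)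

theorem map_eval_eq_nsmul_of_lt_roots (hf : f.Monic) (hsplit : f.Splits) {z : R}
    (h : ∀ β ∈ f.roots, v z < v β) : v (f.eval z) = f.natDegree • v z := by
  rw [hsplit.eval_eq_prod_roots_of_monic hf, map_multiset_prod, Multiset.map_map,
    Multiset.map_congr (f := v ∘ (z - ·)) (g := fun _ => v z) rfl fun β hβ =>
      v.map_sub_eq_of_lt_left (h β hβ),
    Multiset.map_const', Multiset.sum_replicate, hsplit.natDegree_eq_card_roots]

end Domain

section Field

variable {K Γ₀ : Type*} [Field K] [LinearOrderedAddCommMonoidWithTop Γ₀] [Nontrivial Γ₀]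
  (v : AddValuation K Γ₀) {f : K[X]}

theorem map_eval_eq_map_pow_natDegree (hf : f.Monic) {z : K} (hz : z ≠ 0)
    (h : ∀ j < f.natDegree, v (z ^ f.natDegree) < v (f.coeff j * z ^ j)) :
    v (f.eval z) = v (z ^ f.natDegree) := by
  rw [eval_eq_sum_range, Finset.sum_range_succ, hf.coeff_natDegree, one_mul]
  exact v.map_add_eq_of_lt_right <| v.map_lt_sum (v.ne_top_iff.2 (pow_ne_zero _ hz))
    fun j hj => h j (Finset.mem_range.1 hj)

end Field

section RealValued

variable {K : Type*} [Field K] (v : AddValuation K (WithTop ℝ)) {f : K[X]}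

theorem map_natCast_lt_map_prime_pow {p ℓ j : ℕ} (hp : p.Prime) (hp0 : (p : K) ≠ 0)
    (hvp : 0 < v p) (hj0 : 0 < j) (hj : j < p ^ ℓ) :
    v (j : K) < v ((p : K) ^ ℓ) := by
  -- `p ^ a = gcd j (p ^ ℓ)` with `a < ℓ` is an integral combination of `j` and `p ^ ℓ`, so
  -- `v (p ^ ℓ) ≤ v j` would force `v (p ^ ℓ) ≤ v (p ^ a)`.
  obtain ⟨a, haℓ, hgcd⟩ := (Nat.dvd_prime_pow hp).1 (Nat.gcd_dvd_right j (p ^ ℓ))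
  replace haℓ : a < ℓ := by
    refine haℓ.lt_of_ne fun h => ?_
    have := Nat.le_of_dvd hj0 (h ▸ hgcd ▸ Nat.gcd_dvd_left j (p ^ ℓ))
    omega
  have hbezout : (p : K) ^ a = j * (j.gcdA (p ^ ℓ) : K) + (p : K) ^ ℓ * (j.gcdB (p ^ ℓ) : K) := by
    have := congrArg (Int.cast : ℤ → K) (Nat.gcd_eq_gcd_ab j (p ^ ℓ))
    push_cast [hgcd] at this
    exact this
  have hlt : v ((p : K) ^ a) < v ((p : K) ^ ℓ) := by
    rw [← Nat.add_sub_cancel' haℓ.le, pow_add, v.map_mul]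
    simpa using WithTop.add_lt_add_left (v.ne_top_iff.2 (pow_ne_zero a hp0))
      (nsmul_pos hvp (Nat.sub_ne_zero_of_lt haℓ))
  by_contra! hle
  refine hlt.not_ge (hbezout ▸ v.map_le_add ?_ ?_) <;> rw [v.map_mul]
  · exact hle.trans (le_add_of_nonneg_right (v.map_intCast_nonneg _))
  · exact le_add_of_nonneg_right (v.map_intCast_nonneg _)

theorem exists_map_iterate_eval_lt_s10 (hf : f.Monic) (hsplit : f.Splits) (hdeg : 2 ≤ f.natDegree)
    {z : K} (hz : v z < 0)
    (hroots : ∀ β ∈ f.roots, v z < v β) (B : ℝ) :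
    ∃ n, v ((fun t => f.eval t)^[n] z) < B := by
  obtain ⟨c, hc⟩ := WithTop.ne_top_iff_exists.1 hz.ne_top
  have hc0 : c < 0 := by exact_mod_cast hc ▸ hz
  have hiter : ∀ n, v ((fun t => f.eval t)^[n] z) = ((f.natDegree ^ n * c : ℝ) : WithTop ℝ) := by
    intro n
    induction n with
    | zero => simp [hc]
    | succ n ih =>
      have hle : (f.natDegree : ℝ) ^ n * c ≤ c :=
        mul_le_of_one_le_left hc0.le (one_le_pow₀ (by exact_mod_cast (by omega : 1 ≤ f.natDegree)))
      have hlt : ∀ β ∈ f.roots, v ((fun t => f.eval t)^[n] z) < v β := fun β hβ =>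
        lt_of_le_of_lt (ih ▸ by exact_mod_cast hle) (hc ▸ hroots β hβ)
      rw [Function.iterate_succ_apply', v.map_eval_eq_nsmul_of_lt_roots hf hsplit hlt, ih,
        ← WithTop.coe_nsmul, nsmul_eq_mul, pow_succ, mul_comm _ (f.natDegree : ℝ), mul_assoc]
  obtain ⟨n, hn⟩ := pow_unbounded_of_one_lt (B / c) (by exact_mod_cast hdeg : (1 : ℝ) < f.natDegree)
  exact ⟨n, hiter n ▸ by exact_mod_cast (div_lt_iff_of_neg hc0).1 hn⟩

theorem exists_mem_roots_derivative_lt [CharZero K] {p ℓ : ℕ} (hp : p.Prime) (hvp : 0 < v p)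
    (hf : f.Monic) (hdeg : f.natDegree = p ^ ℓ) (h0 : f.coeff 0 = 0)
    (hsplit : f.derivative.Splits) {ρ : K} (hρ : f.IsRoot ρ) (hρ0 : ρ ≠ 0) :
    ∃ γ ∈ f.derivative.roots, v γ < v ρ := by
  by_contra! hγ
  have hp0 : (p : K) ≠ 0 := Nat.cast_ne_zero.2 hp.ne_zero
  have hvρ : v (ρ ^ p ^ ℓ) ≠ ⊤ := v.ne_top_iff.2 (pow_ne_zero _ hρ0)
  have hderiv (i : ℕ) :
      v ((p : K) ^ ℓ) + (p ^ ℓ - 1 - i) • v ρ ≤ v (f.coeff (i + 1) * ((i + 1 : ℕ) : K)) := by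
    simpa [leadingCoeff_derivative, natDegree_derivative, hf.leadingCoeff, hdeg,
      coeff_derivative] using v.add_nsmul_le_map_coeff_of_splits hsplit hγ i
  have hdom : ∀ j < p ^ ℓ, v (ρ ^ p ^ ℓ) < v (f.coeff j * ρ ^ j) := by
    rintro (_ | i) hi
    · simpa [h0] using hvρ.lt_top
    by_contra! h
    have hi' := v.map_natCast_lt_map_prime_pow hp hp0 hvp i.succ_pos hi
    refine lt_irrefl (v ((p : K) ^ ℓ) + v (ρ ^ p ^ ℓ)) ?_
    calc v ((p : K) ^ ℓ) + v (ρ ^ p ^ ℓ)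
        = v ((p : K) ^ ℓ) + (p ^ ℓ - 1 - i) • v ρ + v (ρ ^ (i + 1)) := by
          rw [add_assoc, v.map_pow ρ (i + 1), ← add_nsmul, v.map_pow ρ,
            show p ^ ℓ - 1 - i + (i + 1) = p ^ ℓ by omega]
      _ ≤ v (f.coeff (i + 1) * ((i + 1 : ℕ) : K)) + v (ρ ^ (i + 1)) := add_le_add (hderiv i) le_rfl
      _ = v ((i + 1 : ℕ) : K) + v (f.coeff (i + 1) * ρ ^ (i + 1)) := by
          simp only [v.map_mul]; ac_rfl
      _ ≤ v ((i + 1 : ℕ) : K) + v (ρ ^ p ^ ℓ) := add_le_add le_rfl h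
      _ < v ((p : K) ^ ℓ) + v (ρ ^ p ^ ℓ) := WithTop.add_lt_add_right hvρ hi'
  have := v.map_eval_eq_map_pow_natDegree hf hρ0 (hdeg ▸ hdom)
  rw [hρ.eq_zero, v.map_zero, hdeg] at this
  exact hvρ this.symm

end RealValued

end AddValuation

/-- Let `(K,v)` be a valued field of characteristic `0` and residue
characteristic `p` (`v(p) > 0`; the field is taken algebraically closed so that critical
points are available), and let `f(z) = z^d + a_{d-1}z^{d-1} + ⋯ + a₁ z ∈ K[z]` be a monic
postcritically bounded polynomial of prime power degree `d = p^ℓ ≥ 2` fixing `0`. Then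
`v(aᵢ) > 0` for all `i < d`; in particular `f` has good reduction and its reduction is
`z^d`. -/
theorem stmt_10 {K : Type*} [Field K] [IsAlgClosed K] [CharZero K]
    (v : AddValuation K (WithTop ℝ)) (p : ℕ) (hp : p.Prime)
    (hvp : 0 < v ((p : K)))
    (f : Polynomial K) (hf : f.Monic) (ℓ d : ℕ) (hℓ : 1 ≤ ℓ) (hd : d = p ^ ℓ)
    (hdeg : f.natDegree = d) (h0 : f.coeff 0 = 0)
    (hpcb : ∃ B : ℝ, ∀ γ ∈ f.derivative.roots, ∀ n : ℕ,
      (B : WithTop ℝ) ≤ v ((fun t => f.eval t)^[n] γ)) :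
    ∀ i : ℕ, i < d → 0 < v (f.coeff i) := by
  subst hd
  have hsplit := IsAlgClosed.splits f
  have hroots : f.roots ≠ 0 := by
    rw [← Multiset.card_pos, ← hsplit.natDegree_eq_card_roots, hdeg]
    exact pow_pos hp.pos ℓ
  obtain ⟨ρ, hρ, hρmin⟩ := f.roots.exists_min_image v hroots
  have hρpos : 0 < v ρ := by
    by_contra! hρ0
    have hρne : ρ ≠ 0 := by rintro rfl; simp at hρ0
    obtain ⟨γ, hγ, hγρ⟩ := v.exists_mem_roots_derivative_lt hp hvp hf hdeg h0
      (IsAlgClosed.splits _) (isRoot_of_mem_roots hρ) hρne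
    obtain ⟨B, hB⟩ := hpcb
    obtain ⟨n, hn⟩ := v.exists_map_iterate_eval_lt_s10 hf hsplit
      (hdeg ▸ hp.two_le.trans (Nat.le_self_pow (by omega) p)) (hγρ.trans_le hρ0)
      (fun β hβ => hγρ.trans_le (hρmin β hβ)) B
    exact (hB γ hγ n).not_gt hn
  intro i hi
  calc 0 < (p ^ ℓ - i) • v ρ := nsmul_pos hρpos (by omega)
    _ ≤ v (f.coeff i) := by
      simpa [hf.leadingCoeff, hdeg] using v.add_nsmul_le_map_coeff_of_splits hsplit hρmin i
end

section
/- Let C_v be an algebraically closed complete non-archimedean field, f ∈ C_v[z] a postcritically bounded polynomial, and a ∈ C_v a point that avoids the postcritical set of f (i.e., some open disk around a is disjoint from the postcritical set). Then every element a₀ of the iterated preimage set T_∞(f,a) also avoids the postcritical set of f. -/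
/-! The postcritical set is forward invariant and `fⁿ` is continuous, so the preimage under `fⁿ`
of a disk about `a = fⁿ(a₀)` missing the postcritical set is a neighbourhood of `a₀` missing it too. -/

open Set Metric

theorem exists_ball_disjoint_of_mapsTo {X Y : Type*} [PseudoMetricSpace X] [PseudoMetricSpace Y]
    {g : X → Y} {s : Set X} {t : Set Y} (hg : MapsTo g s t) {x : X} (hgx : ContinuousAt g x)
    {R : ℝ} (hR : 0 < R) (ht : Disjoint (ball (g x) R) t) :
    ∃ r > 0, Disjoint (ball x r) s := by
  obtain ⟨r, hr, hball⟩ := Metric.continuousAt_iff.mp hgx R hR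
  exact ⟨r, hr, disjoint_left.mpr fun y hy hys => disjoint_left.mp ht (hball hy) (hg hys)⟩

namespace Polynomial

variable {R : Type*} [CommSemiring R]

def postcriticalSet (f : R[X]) : Set R :=
  {y | ∃ γ, f.derivative.eval γ = 0 ∧ ∃ n : ℕ, (fun t => f.eval t)^[n] γ = y}

theorem mapsTo_postcriticalSet (f : R[X]) :
    MapsTo (fun t => f.eval t) f.postcriticalSet f.postcriticalSet := by
  rintro _ ⟨γ, hγ, n, rfl⟩
  exact ⟨γ, hγ, n + 1, Function.iterate_succ_apply' _ n γ⟩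

end Polynomial

theorem stmt_16_general {K : Type*} [NontriviallyNormedField K]
    (f : Polynomial K)
    (P : Set K) (hP : P = {y : K | ∃ γ : K, f.derivative.eval γ = 0 ∧
      ∃ n : ℕ, (fun t => f.eval t)^[n] γ = y})
    (a : K) (R : ℝ) (hR : 0 < R) (hav : Metric.ball a R ∩ P = ∅)
    (a₀ : K) (ha₀ : ∃ n : ℕ, (fun t => f.eval t)^[n] a₀ = a) :
    ∃ R₀ : ℝ, 0 < R₀ ∧ Metric.ball a₀ R₀ ∩ P = ∅ := by
  obtain ⟨n, rfl⟩ := ha₀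
  change P = f.postcriticalSet at hP
  subst hP
  obtain ⟨r, hr, hdisj⟩ := exists_ball_disjoint_of_mapsTo
    (f.mapsTo_postcriticalSet.iterate n) (f.continuous.iterate n).continuousAt hR
    (disjoint_iff_inter_eq_empty.mpr hav)
  exact ⟨r, hr, disjoint_iff_inter_eq_empty.mp hdisj⟩

/-- Let `C_v` be an algebraically closed complete non-archimedean
(nontrivially) normed field, `f` a postcritically bounded polynomial over it, and `a` a
point avoiding the postcritical set `P = {fⁿ(γ) : n ≥ 0, f'(γ) = 0}` of `f` (some open
ball about `a` is disjoint from `P`). Then every element `a₀` of the iterated preimage set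
`T_∞(f,a)` also avoids the postcritical set of `f`. -/
theorem stmt_16 {K : Type*} [NontriviallyNormedField K] [IsUltrametricDist K]
    [IsAlgClosed K] [CompleteSpace K]
    (f : Polynomial K)
    (P : Set K) (hP : P = {y : K | ∃ γ : K, f.derivative.eval γ = 0 ∧
      ∃ n : ℕ, (fun t => f.eval t)^[n] γ = y})
    (hbd : Bornology.IsBounded P)
    (a : K) (R : ℝ) (hR : 0 < R) (hav : Metric.ball a R ∩ P = ∅)
    (a₀ : K) (ha₀ : ∃ n : ℕ, (fun t => f.eval t)^[n] a₀ = a) :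
    ∃ R₀ : ℝ, 0 < R₀ ∧ Metric.ball a₀ R₀ ∩ P = ∅ :=
  stmt_16_general f P hP a R hR hav a₀ ha₀
end
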